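/- arXiv:2502.17767 — 3 statements merged into one kernel-verified Lean document; each statement's English description precedes it below -/
import Mathlib

section
/- Let A be an invertible n×n real matrix, b a vector, and x̂ a nonzero vector. The minimum spectral norm of a perturbation ΔA such that (A + ΔA)x̂ = b satisfies ‖ΔA‖ = ‖b - Ax̂‖ / ‖x̂‖. In particular, there exists ΔA with (A+ΔA)x̂ = b and ‖ΔA‖ = ‖b - Ax̂‖/‖x̂‖, and any ΔA with (A+ΔA)x̂ = b satisfies ‖ΔA‖ ≥ ‖b - Ax̂‖/‖x̂‖. -/
/-! The lower bound is `‖ΔA x̂‖ ≤ ‖ΔA‖ ‖x̂‖` applied to `ΔA x̂ = b - A x̂`. It is attained by the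
rank-one perturbation `y ↦ (⟪x̂, y⟫ / ‖x̂‖²) • (b - A x̂)`, whose norm is
`‖x̂‖ ‖b - A x̂‖ / ‖x̂‖²`. -/

open Matrix

noncomputable section

/-- Spectral (operator `ℓ²`) norm of a real matrix. -/
def sn {n : ℕ} (A : Matrix (Fin n) (Fin n) ℝ) : ℝ :=
  ‖LinearMap.toContinuousLinearMap (Matrix.toEuclideanLin A)‖

/-- Matrix–vector product, as a map on Euclidean space. -/
def mv {n : ℕ} (A : Matrix (Fin n) (Fin n) ℝ) (x : EuclideanSpace ℝ (Fin n)) :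
    EuclideanSpace ℝ (Fin n) :=
  Matrix.toEuclideanLin A x

theorem ContinuousLinearMap.exists_apply_eq_and_norm_eq_div {𝕜 E F : Type*} [RCLike 𝕜]
    [NormedAddCommGroup E] [InnerProductSpace 𝕜 E] [NormedAddCommGroup F] [NormedSpace 𝕜 F]
    {x : E} (hx : x ≠ 0) (r : F) :
    ∃ T : E →L[𝕜] F, T x = r ∧ ‖T‖ = ‖r‖ / ‖x‖ := by
  have hx' : ‖x‖ ≠ 0 := norm_ne_zero_iff.mpr hx
  refine ⟨(((‖x‖ : 𝕜) ^ 2)⁻¹ • innerSL 𝕜 x).smulRight r, ?_, ?_⟩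
  · have hxx : (‖x‖ : 𝕜) ^ 2 ≠ 0 := by exact_mod_cast pow_ne_zero 2 hx'
    simp [inner_self_eq_norm_sq_to_K, inv_mul_cancel₀ hxx]
  · rw [norm_smulRight_apply, norm_smul, innerSL_apply_norm, norm_inv, norm_pow,
      RCLike.norm_ofReal, abs_norm]
    field_simp

section

variable {n : ℕ}

theorem mv_add (A B : Matrix (Fin n) (Fin n) ℝ) (x : EuclideanSpace ℝ (Fin n)) :
    mv (A + B) x = mv A x + mv B x := by
  simp [mv]

theorem norm_div_norm_le_sn_of_mv_eq {A : Matrix (Fin n) (Fin n) ℝ}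
    {x r : EuclideanSpace ℝ (Fin n)} (h : mv A x = r) : ‖r‖ / ‖x‖ ≤ sn A :=
  h ▸ (LinearMap.toContinuousLinearMap (toEuclideanLin A)).ratio_le_opNorm x

theorem exists_mv_eq_and_sn_eq (T : EuclideanSpace ℝ (Fin n) →L[ℝ] EuclideanSpace ℝ (Fin n)) :
    ∃ A : Matrix (Fin n) (Fin n) ℝ, (∀ x, mv A x = T x) ∧ sn A = ‖T‖ := by
  refine ⟨toEuclideanLin.symm T, fun x => by simp [mv], ?_⟩
  rw [sn, LinearEquiv.apply_symm_apply]
  rfl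

end

theorem stmt0_general {n : ℕ} (A : Matrix (Fin n) (Fin n) ℝ) (b xh : EuclideanSpace ℝ (Fin n))
    (hx : xh ≠ 0) :
    (∃ ΔA : Matrix (Fin n) (Fin n) ℝ, mv (A + ΔA) xh = b ∧
      sn ΔA = ‖b - mv A xh‖ / ‖xh‖) ∧
    (∀ ΔA : Matrix (Fin n) (Fin n) ℝ, mv (A + ΔA) xh = b →
      ‖b - mv A xh‖ / ‖xh‖ ≤ sn ΔA) := by
  have residual_eq {ΔA : Matrix (Fin n) (Fin n) ℝ} (h : mv (A + ΔA) xh = b) :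
      mv ΔA xh = b - mv A xh := by
    rw [← h, mv_add, add_sub_cancel_left]
  obtain ⟨T, hTx, hT⟩ := ContinuousLinearMap.exists_apply_eq_and_norm_eq_div (𝕜 := ℝ) hx
    (b - mv A xh)
  obtain ⟨ΔA, hΔA, hsn⟩ := exists_mv_eq_and_sn_eq T
  refine ⟨⟨ΔA, ?_, hsn.trans hT⟩, fun ΔA h => norm_div_norm_le_sn_of_mv_eq (residual_eq h)⟩
  rw [mv_add, hΔA, hTx, add_sub_cancel]

/-- Rigal–Gaches: the minimal spectral-norm backward error equals the scaled residual. -/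
theorem stmt0 {n : ℕ} (A : Matrix (Fin n) (Fin n) ℝ) (b xh : EuclideanSpace ℝ (Fin n))
    (hA : Invertible A) (hx : xh ≠ 0) :
    (∃ ΔA : Matrix (Fin n) (Fin n) ℝ, mv (A + ΔA) xh = b ∧
      sn ΔA = ‖b - mv A xh‖ / ‖xh‖) ∧
    (∀ ΔA : Matrix (Fin n) (Fin n) ℝ, mv (A + ΔA) xh = b →
      ‖b - mv A xh‖ / ‖xh‖ ≤ sn ΔA) :=
  stmt0_general A b xh hx
end
end

section
/- Let A be the n×n cyclic shift matrix (A has ones on the subdiagonal and a one in the top-right corner, zeros elsewhere) and b = e₁ the first standard basis vector. Then A is orthogonal (so cond(A) = 1), and for every k ≤ n−1, every vector x_k in the Krylov space span{b, Ab, ..., A^{k−1}b} satisfies ‖b − A x_k‖ ≥ 1. Hence GMRES makes no residual progress until step n. -/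
open Matrix

noncomputable section

lemma aux_mod_succ (j n : ℕ) : (j % n + 1) % n = (j + 1) % n := by
  conv_rhs => rw [← Nat.mod_add_div j n, Nat.add_right_comm, Nat.add_mul_mod_self_left]

lemma aux_inj {a b n : ℕ} (ha : a < n) (hb : b < n) (h : (a+1) % n = (b+1) % n) : a = b := by
  by_cases h1 : a + 1 = n <;> by_cases h2 : b + 1 = n
  · omega
  · rw [h1, Nat.mod_self, Nat.mod_eq_of_lt (by omega)] at h; omega
  · rw [h2, Nat.mod_self, Nat.mod_eq_of_lt (by omega)] at h; omega
  · rw [Nat.mod_eq_of_lt (by omega), Nat.mod_eq_of_lt (by omega)] at h; omega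

lemma aux_mv_apply {n : ℕ} (M : Matrix (Fin n) (Fin n) ℝ) (v : EuclideanSpace ℝ (Fin n))
    (i : Fin n) : mv M v i = ∑ s, M i s * v s := rfl

/-- GMRES stagnation for the cyclic shift matrix: A is orthogonal, yet for every k ≤ n−1 and
every x in the k-th Krylov space, the residual ‖b − Ax‖ is at least 1. -/
theorem stmt12 {n : ℕ} (hn : 0 < n) (A : Matrix (Fin n) (Fin n) ℝ)
    (b : EuclideanSpace ℝ (Fin n))
    (hA : A = Matrix.of fun i j : Fin n => if (i : ℕ) = ((j : ℕ) + 1) % n then 1 else 0)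
    (hb : b = EuclideanSpace.single ⟨0, hn⟩ 1) :
    Aᵀ * A = 1 ∧
    ∀ k : ℕ, k ≤ n - 1 →
      ∀ x ∈ Submodule.span ℝ (Set.range fun j : Fin k => mv (A ^ (j : ℕ)) b),
        1 ≤ ‖b - mv A x‖ := by
  -- the "successor mod n" map on `Fin n`
  set f : Fin n → Fin n := fun i => ⟨((i : ℕ) + 1) % n, Nat.mod_lt _ hn⟩ with hf
  have hfinj : Function.Injective f := by
    intro a c h
    exact Fin.ext (aux_inj a.isLt c.isLt (congrArg Fin.val h))
  have hAentry : ∀ i j : Fin n, A i j = if i = f j then (1:ℝ) else 0 := by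
    intro i j
    simp only [hA, Matrix.of_apply, hf, Fin.ext_iff]
  constructor
  · ext i j
    simp only [Matrix.mul_apply, Matrix.transpose_apply, hAentry, ite_mul, one_mul, zero_mul,
      mul_ite, mul_one, mul_zero, Finset.sum_ite_eq', Finset.mem_univ, if_true]
    by_cases h : i = j
    · simp [h, Matrix.one_apply]
    · have hne : ¬ (f i = f j) := fun hc => h (hfinj hc)
      have hne' : ¬ (f j = f i) := fun hc => h ((hfinj hc).symm)
      simp [h, hne, hne', Matrix.one_apply]
  · -- key: A ^ j *ᵥ e₀ = e_{j mod n}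
    have hpow : ∀ j : ℕ, mv (A ^ j) b =
        EuclideanSpace.single ⟨j % n, Nat.mod_lt _ hn⟩ 1 := by
      intro j
      induction j with
      | zero =>
        ext t
        rw [pow_zero, aux_mv_apply, hb]
        simp [Matrix.one_apply, EuclideanSpace.single_apply, Nat.zero_mod]
      | succ j ih =>
        ext t
        set jm : Fin n := ⟨j % n, Nat.mod_lt _ hn⟩ with hjm
        have hstep : mv (A ^ (j+1)) b t = ∑ s, A t s * (EuclideanSpace.single jm (1:ℝ)) s := by
          rw [aux_mv_apply]
          have h1 : (A ^ (j+1)) *ᵥ (fun s => b s) = A *ᵥ ((A ^ j) *ᵥ (fun s => b s)) := by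
            rw [pow_succ', Matrix.mulVec_mulVec]
          have h2 : ((A ^ j) *ᵥ (fun s => b s)) = fun s => (EuclideanSpace.single jm (1:ℝ)) s := by
            funext s
            exact (aux_mv_apply (A ^ j) b s).symm.trans (by rw [ih])
          calc (∑ s, (A ^ (j+1)) t s * b s) = ((A ^ (j+1)) *ᵥ (fun s => b s)) t := rfl
            _ = (A *ᵥ ((A ^ j) *ᵥ (fun s => b s))) t := by rw [h1]
            _ = (A *ᵥ (fun s => (EuclideanSpace.single jm (1:ℝ)) s)) t := by rw [h2]
            _ = ∑ s, A t s * (EuclideanSpace.single jm (1:ℝ)) s := rfl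
        rw [hstep]
        have hval : f jm = ⟨(j+1) % n, Nat.mod_lt _ hn⟩ := Fin.ext (aux_mod_succ j n)
        simp only [hAentry, EuclideanSpace.single_apply, ite_mul, one_mul, zero_mul,
          mul_ite, mul_one, mul_zero, Finset.sum_ite_eq', Finset.mem_univ, if_true, hval]
    intro k hk x hx
    -- the last coordinate of x is 0
    set m0 : Fin n := ⟨n - 1, by omega⟩ with hm0
    have hL : (EuclideanSpace.projₗ (𝕜 := ℝ) m0) x = 0 := by
      refine Submodule.span_induction ?_ ?_ ?_ ?_ hx
      · rintro v ⟨j, rfl⟩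
        show (EuclideanSpace.projₗ (𝕜 := ℝ) m0) (mv (A ^ (j : ℕ)) b) = 0
        rw [hpow (j : ℕ)]
        have hne : (⟨(j : ℕ) % n, Nat.mod_lt _ hn⟩ : Fin n) ≠ m0 := by
          intro hc
          have h1 := congrArg Fin.val hc
          have h2 : (j : ℕ) % n = (j : ℕ) := Nat.mod_eq_of_lt (by omega)
          simp only [hm0] at h1
          omega
        show (EuclideanSpace.single (⟨(j : ℕ) % n, Nat.mod_lt _ hn⟩ : Fin n) (1:ℝ)) m0 = 0
        rw [EuclideanSpace.single_apply, if_neg (fun hc => hne hc.symm)]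
      · simp
      · intro u v _ _ hu hv; rw [map_add, hu, hv, add_zero]
      · intro a u _ hu; rw [LinearMap.map_smul, hu, smul_zero]
    have hxm0 : x m0 = 0 := hL
    -- the first coordinate of the residual is 1
    set i0 : Fin n := ⟨0, hn⟩ with hi0
    have hres : (b - mv A x) i0 = 1 := by
      have hcond : ∀ s : Fin n, (i0 = f s) ↔ s = m0 := by
        intro s
        constructor
        · intro h
          have h1 := congrArg Fin.val h
          simp only [hf, hi0] at h1
          apply Fin.ext
          simp only [hm0]
          have hs := s.isLt
          by_cases hsn : (s : ℕ) + 1 = n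
          · omega
          · rw [Nat.mod_eq_of_lt (by omega)] at h1; omega
        · rintro rfl
          apply Fin.ext
          simp only [hf, hi0, hm0]
          have h2 : (n - 1) + 1 = n := by omega
          rw [h2, Nat.mod_self]
      have hAx : mv A x i0 = x m0 := by
        rw [aux_mv_apply]
        rw [Finset.sum_congr rfl (fun s _ => by
          rw [hAentry, if_congr (hcond s) rfl rfl, ite_mul, one_mul, zero_mul])]
        rw [Finset.sum_ite_eq']
        simp
      have hbi0 : b i0 = 1 := by
        rw [hb, EuclideanSpace.single_apply, if_pos rfl]
      show b i0 - mv A x i0 = 1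
      rw [hbi0, hAx, hxm0, sub_zero]
    -- conclude via Cauchy–Schwarz with b
    have hnb : ‖b‖ = 1 := by rw [hb, EuclideanSpace.norm_single]; norm_num
    have hinner : inner ℝ b (b - mv A x) = (1 : ℝ) := by
      conv_lhs => rw [hb]
      rw [EuclideanSpace.inner_single_left]
      rw [show (starRingEnd ℝ) 1 = 1 by simp, one_mul, ← hb]
      exact hres
    calc (1:ℝ) = inner ℝ b (b - mv A x) := hinner.symm
      _ ≤ ‖b‖ * ‖b - mv A x‖ := real_inner_le_norm _ _
      _ = ‖b - mv A x‖ := by rw [hnb, one_mul]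
end
end

section
/- Let M be symmetric positive definite with eigenvalues in [a, b], 0 < a ≤ b, and let c ∈ ℝ^n. For any polynomial p with p(0) = 1 and deg p ≤ k, the vector y = (I − p(M))M⁻¹c lies in the Krylov space span{c, Mc, …, M^{k−1}c} and satisfies ‖M(y − M⁻¹c)‖ ≤ max_{λ∈[a,b]}|p(λ)| · ‖c‖. Hence there exists y in the k-th Krylov space with ‖M‖·‖y − M⁻¹c‖ ≤ (b/a)·2·((√(b/a) − 1)/(√(b/a) + 1))ᵏ·‖c‖. -/
open Matrix

noncomputable section

/-!
If `p 0 = 1` then `1 - p = q * X` with `q = (1 - p).divX` of degree `< k`, so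
`(I - p(M)) M⁻¹ = q(M)` maps `c` into the Krylov space, and the residual
`M (y - M⁻¹ c) = -p(M) c` is bounded by `max |p|` over the spectrum times `‖c‖`: in an orthonormal
eigenbasis of `M`, `p(M)` scales the `i`-th coordinate by `p(λᵢ)`.

For the explicit bound take `p(x) = T_k((b + a - 2x)/(b - a)) / T_k((b + a)/(b - a))`. On `[a, b]`
it is bounded by `1 / T_k((b + a)/(b - a))`, and writing `(b + a)/(b - a) = cosh u` with
`eᵘ = (√κ + 1)/(√κ - 1)`, `κ = b/a`, gives `T_k(cosh u) = cosh (k u) ≥ eᵏᵘ / 2`.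
Finally `‖M‖ ≤ b` and `‖x‖ ≤ a⁻¹ ‖M x‖`.
-/

open Polynomial Polynomial.Chebyshev

theorem Polynomial.divX_mul_X_of_eval_zero {R : Type*} [Semiring R] {p : R[X]}
    (hp : p.eval 0 = 0) : p.divX * X = p := by
  simpa [coeff_zero_eq_eval_zero, hp] using divX_mul_X_add p

theorem Polynomial.aeval_divX_one_sub_mul_self {R A : Type*} [CommRing R] [Ring A] [Algebra R A]
    {p : R[X]} (x : A) (hp : p.eval 0 = 1) :
    aeval x (1 - p).divX * x = 1 - aeval x p := by
  conv_lhs => enter [2]; rw [← aeval_X (R := R) x]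
  rw [← map_mul, divX_mul_X_of_eval_zero (by simp [hp]), map_sub, map_one]

theorem Polynomial.degree_divX_lt_of_natDegree_le {R : Type*} [Semiring R] {p : R[X]} {k : ℕ}
    (hp : p.natDegree ≤ k) : p.divX.degree < k :=
  (degree_lt_iff_coeff_zero _ _).2 fun m hm => by
    rw [coeff_divX]
    exact coeff_eq_zero_of_natDegree_lt (by omega)

theorem Polynomial.Chebyshev.pow_div_two_le_eval_T {s : ℝ} (hs : 1 < s) (k : ℕ) :
    ((s + 1) / (s - 1)) ^ k / 2 ≤ (T ℝ k).eval ((s ^ 2 + 1) / (s ^ 2 - 1)) := by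
  have hw : 0 < (s + 1) / (s - 1) := div_pos (by linarith) (by linarith)
  have hcosh : Real.cosh (Real.log ((s + 1) / (s - 1))) = (s ^ 2 + 1) / (s ^ 2 - 1) := by
    rw [Real.cosh_log hw, inv_div]
    field_simp [show s - 1 ≠ 0 by linarith, show s + 1 ≠ 0 by linarith,
      show s ^ 2 - 1 ≠ 0 by nlinarith]
    ring
  rw [← hcosh, T_real_cosh, Real.cosh_eq]
  push_cast
  rw [Real.exp_nat_mul, Real.exp_log hw]
  linarith [Real.exp_pos (-(k * Real.log ((s + 1) / (s - 1))))]

def normalizedChebyshevT (a b : ℝ) (k : ℕ) : ℝ[X] :=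
  C ((T ℝ k).eval ((b + a) / (b - a)))⁻¹ * (T ℝ k).comp (C (b - a)⁻¹ * (C (b + a) - 2 * X))

section normalizedChebyshevT

variable {a b : ℝ}

theorem eval_normalizedChebyshevT (k : ℕ) (x : ℝ) :
    (normalizedChebyshevT a b k).eval x =
      (T ℝ k).eval ((b + a - 2 * x) / (b - a)) / (T ℝ k).eval ((b + a) / (b - a)) := by
  simp only [normalizedChebyshevT, eval_mul, eval_C, eval_comp, eval_sub, eval_X, eval_ofNat]
  rw [inv_mul_eq_div, inv_mul_eq_div]

theorem natDegree_normalizedChebyshevT_le (a b : ℝ) (k : ℕ) :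
    (normalizedChebyshevT a b k).natDegree ≤ k := by
  refine (natDegree_C_mul_le _ _).trans (natDegree_comp_le.trans ?_)
  rw [natDegree_T, Int.natAbs_natCast]
  refine (Nat.mul_le_mul_left k (natDegree_C_mul_le _ _)).trans ?_
  have : (C (b + a) - 2 * X : ℝ[X]).natDegree ≤ 1 := by compute_degree
  nlinarith

theorem one_le_eval_T_add_div_sub (ha : 0 < a) (hab : a < b) (k : ℕ) :
    1 ≤ (T ℝ k).eval ((b + a) / (b - a)) :=
  one_le_eval_T_real k ((one_le_div (by linarith)).2 (by linarith))

theorem eval_zero_normalizedChebyshevT (ha : 0 < a) (hab : a < b) (k : ℕ) :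
    (normalizedChebyshevT a b k).eval 0 = 1 := by
  rw [eval_normalizedChebyshevT, mul_zero, sub_zero]
  exact div_self (by linarith [one_le_eval_T_add_div_sub ha hab k])

theorem abs_eval_normalizedChebyshevT_le (ha : 0 < a) (hab : a < b) (k : ℕ) {x : ℝ}
    (hx : x ∈ Set.Icc a b) :
    |(normalizedChebyshevT a b k).eval x| ≤ ((T ℝ k).eval ((b + a) / (b - a)))⁻¹ := by
  have hT := one_le_eval_T_add_div_sub ha hab k
  have hℓ : |(b + a - 2 * x) / (b - a)| ≤ 1 := by
    rw [abs_div, abs_of_pos (by linarith : 0 < b - a), div_le_one (by linarith), abs_le]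
    constructor <;> linarith [hx.1, hx.2]
  rw [eval_normalizedChebyshevT, abs_div, abs_of_pos (zero_lt_one.trans_le hT), div_eq_mul_inv]
  exact mul_le_of_le_one_left (by positivity) (abs_eval_T_real_le_one k hℓ)

end normalizedChebyshevT

theorem exists_eval_zero_eq_one_abs_eval_le {a b : ℝ} (ha : 0 < a) (hab : a ≤ b) (k : ℕ) :
    ∃ p : ℝ[X], p.eval 0 = 1 ∧ p.natDegree ≤ k ∧ ∀ x ∈ Set.Icc a b,
      |p.eval x| ≤ 2 * ((Real.sqrt (b / a) - 1) / (Real.sqrt (b / a) + 1)) ^ k := by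
  rcases hab.eq_or_lt with rfl | hab
  · refine ⟨(1 - C a⁻¹ * X) ^ k, by simp, ?_, fun x hx => ?_⟩
    · exact (natDegree_pow_le_of_le k (by compute_degree!)).trans (mul_one k).le
    · obtain rfl : x = a := le_antisymm hx.2 hx.1
      simp only [eval_pow, eval_sub, eval_one, eval_mul, eval_C, eval_X, inv_mul_cancel₀ ha.ne',
        sub_self, div_self ha.ne', Real.sqrt_one, abs_pow, abs_zero, zero_div]
      exact le_mul_of_one_le_left (by positivity) one_le_two
  refine ⟨normalizedChebyshevT a b k, eval_zero_normalizedChebyshevT ha hab k,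
    natDegree_normalizedChebyshevT_le a b k, fun x hx => ?_⟩
  set s := Real.sqrt (b / a)
  have hs : 1 < s := Real.lt_sqrt_of_sq_lt (by rw [one_pow]; exact (one_lt_div ha).2 hab)
  have ht : (s ^ 2 + 1) / (s ^ 2 - 1) = (b + a) / (b - a) := by
    rw [Real.sq_sqrt (div_pos (ha.trans hab) ha).le]
    field_simp
  have hlow := pow_div_two_le_eval_T hs k
  rw [ht] at hlow
  refine (abs_eval_normalizedChebyshevT_le ha hab k hx).trans ?_
  have hpos : 0 < ((s + 1) / (s - 1)) ^ k / 2 :=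
    div_pos (pow_pos (div_pos (by linarith) (by linarith)) k) two_pos
  calc ((T ℝ k).eval ((b + a) / (b - a)))⁻¹ ≤ (((s + 1) / (s - 1)) ^ k / 2)⁻¹ :=
        inv_anti₀ hpos hlow
    _ = 2 * ((s - 1) / (s + 1)) ^ k := by rw [inv_div, div_eq_mul_inv, ← inv_pow, inv_div]

namespace Matrix

theorem one_sub_aeval_mul_inv {ι R : Type*} [Fintype ι] [DecidableEq ι] [CommRing R]
    (M : Matrix ι ι R) [Invertible M] {p : R[X]} (hp : p.eval 0 = 1) :
    (1 - aeval M p) * M⁻¹ = aeval M (1 - p).divX := by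
  rw [← aeval_divX_one_sub_mul_self M hp, mul_assoc, mul_inv_of_invertible, mul_one]

variable {n : ℕ}

theorem mv_eq_toLpLinAlgEquiv (A : Matrix (Fin n) (Fin n) ℝ) (x : EuclideanSpace ℝ (Fin n)) :
    mv A x = toLpLinAlgEquiv 2 A x :=
  rfl

theorem mv_residual_eq_neg_mv_aeval (M : Matrix (Fin n) (Fin n) ℝ) [Invertible M] (p : ℝ[X])
    (c : EuclideanSpace ℝ (Fin n)) :
    mv M (mv ((1 - aeval M p) * M⁻¹) c - mv M⁻¹ c) = -mv (aeval M p) c := by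
  have h : M * ((1 - aeval M p) * M⁻¹ - M⁻¹) = -aeval M p := by
    have hc : Commute M (aeval M p) := by simpa using (Commute.all X p).map (aeval M)
    rw [mul_sub, ← mul_assoc, ((Commute.one_right M).sub_right hc).eq, mul_assoc,
      mul_inv_of_invertible, mul_one, sub_sub_cancel_left]
  simp only [mv_eq_toLpLinAlgEquiv, ← Module.End.mul_apply, ← map_mul, ← map_sub,
    ← LinearMap.sub_apply, h, map_neg, LinearMap.neg_apply]

def krylovSubspace (M : Matrix (Fin n) (Fin n) ℝ) (c : EuclideanSpace ℝ (Fin n)) (k : ℕ) :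
    Submodule ℝ (EuclideanSpace ℝ (Fin n)) :=
  Submodule.span ℝ (Set.range fun j : Fin k => mv (M ^ (j : ℕ)) c)

theorem mv_aeval_mem_krylovSubspace (M : Matrix (Fin n) (Fin n) ℝ)
    (c : EuclideanSpace ℝ (Fin n)) {k : ℕ} {q : ℝ[X]} (hq : q.degree < k) :
    mv (aeval M q) c ∈ krylovSubspace M c k := by
  rcases eq_or_ne q 0 with rfl | hq0
  · simp [mv]
  rw [aeval_eq_sum_range' ((natDegree_lt_iff_degree_lt hq0).2 hq), Finset.sum_range,
    krylovSubspace, Submodule.mem_span_range_iff_exists_fun]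
  exact ⟨fun j => q.coeff j, by simp [mv, map_sum]⟩

theorem mv_one_sub_aeval_mul_inv_mem_krylovSubspace (M : Matrix (Fin n) (Fin n) ℝ)
    [Invertible M] (c : EuclideanSpace ℝ (Fin n)) {k : ℕ} {p : ℝ[X]} (hp0 : p.eval 0 = 1)
    (hpk : p.natDegree ≤ k) :
    mv ((1 - aeval M p) * M⁻¹) c ∈ krylovSubspace M c k := by
  rw [one_sub_aeval_mul_inv M hp0]
  refine mv_aeval_mem_krylovSubspace M c (degree_divX_lt_of_natDegree_le ?_)
  simpa using natDegree_sub_le_of_le (natDegree_one.trans_le k.zero_le) hpk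

end Matrix

namespace OrthonormalBasis

variable {ι E : Type*} [Fintype ι] [NormedAddCommGroup E]

theorem repr_apply_eq_mul_of_apply_eq_smul {𝕜 : Type*} [RCLike 𝕜] [InnerProductSpace 𝕜 E]
    (B : OrthonormalBasis ι 𝕜 E) {T : E →ₗ[𝕜] E} {f : ι → 𝕜} (hT : ∀ j, T (B j) = f j • B j)
    (x : E) (i : ι) :
    B.repr (T x) i = f i * B.repr x i := by
  classical
  conv_lhs => rw [← B.sum_repr x]
  simp [map_sum, map_smul, hT, smul_smul, B.repr_self, Pi.single_apply, mul_comm]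

theorem norm_le_of_repr_eq_mul [InnerProductSpace ℝ E] (B : OrthonormalBasis ι ℝ E) {v w : E}
    {f : ι → ℝ} {r : ℝ} (h : ∀ i, B.repr w i = f i * B.repr v i) (hr : 0 ≤ r)
    (hf : ∀ i, |f i| ≤ r) :
    ‖w‖ ≤ r * ‖v‖ := by
  have hsq : ‖w‖ ^ 2 ≤ (r * ‖v‖) ^ 2 := by
    rw [mul_pow, ← B.repr.norm_map w, ← B.repr.norm_map v, EuclideanSpace.norm_sq_eq,
      EuclideanSpace.norm_sq_eq, Finset.mul_sum]
    refine Finset.sum_le_sum fun i _ => ?_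
    rw [h, Real.norm_eq_abs, Real.norm_eq_abs, abs_mul, mul_pow]
    exact mul_le_mul_of_nonneg_right (pow_le_pow_left₀ (abs_nonneg _) (hf i) 2) (by positivity)
  exact (pow_le_pow_iff_left₀ (norm_nonneg _) (by positivity) two_ne_zero).1 hsq

end OrthonormalBasis

namespace Matrix.IsHermitian

variable {n : ℕ} {M : Matrix (Fin n) (Fin n) ℝ}

theorem mv_aeval_eigenvectorBasis (hM : M.IsHermitian) (p : ℝ[X]) (i : Fin n) :
    mv (aeval M p) (hM.eigenvectorBasis i) =
      p.eval (hM.eigenvalues i) • hM.eigenvectorBasis i := by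
  have hM_eig : toLpLinAlgEquiv 2 M (hM.eigenvectorBasis i) =
      hM.eigenvalues i • hM.eigenvectorBasis i :=
    congrArg (WithLp.toLp 2) (hM.mulVec_eigenvectorBasis i)
  rw [mv_eq_toLpLinAlgEquiv, ← aeval_algHom_apply,
    Module.End.aeval_apply_of_mem_apply_eq_smul hM_eig]

theorem repr_mv_aeval (hM : M.IsHermitian) (p : ℝ[X]) (x : EuclideanSpace ℝ (Fin n))
    (i : Fin n) :
    hM.eigenvectorBasis.repr (mv (aeval M p) x) i =
      p.eval (hM.eigenvalues i) * hM.eigenvectorBasis.repr x i :=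
  hM.eigenvectorBasis.repr_apply_eq_mul_of_apply_eq_smul (T := toEuclideanLin (aeval M p))
    (hM.mv_aeval_eigenvectorBasis p) x i

theorem norm_mv_aeval_le (hM : M.IsHermitian) {p : ℝ[X]} {r : ℝ} (hr : 0 ≤ r)
    (hp : ∀ μ ∈ spectrum ℝ M, |p.eval μ| ≤ r) (x : EuclideanSpace ℝ (Fin n)) :
    ‖mv (aeval M p) x‖ ≤ r * ‖x‖ :=
  hM.eigenvectorBasis.norm_le_of_repr_eq_mul (hM.repr_mv_aeval p x) hr
    fun i => hp _ (hM.eigenvalues_mem_spectrum_real i)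

theorem sn_le (hM : M.IsHermitian) {b : ℝ} (hb : 0 ≤ b) (h : ∀ μ ∈ spectrum ℝ M, |μ| ≤ b) :
    sn M ≤ b :=
  ContinuousLinearMap.opNorm_le_bound _ hb fun x => by
    have := hM.norm_mv_aeval_le (p := X) hb (by simpa only [eval_X] using h) x
    rwa [aeval_X] at this

theorem norm_le_inv_mul_norm_mv (hM : M.IsHermitian) {a : ℝ} (ha : 0 < a)
    (h : ∀ μ ∈ spectrum ℝ M, a ≤ μ) (x : EuclideanSpace ℝ (Fin n)) :
    ‖x‖ ≤ a⁻¹ * ‖mv M x‖ := by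
  have hpos i : 0 < hM.eigenvalues i := ha.trans_le (h _ (hM.eigenvalues_mem_spectrum_real i))
  refine hM.eigenvectorBasis.norm_le_of_repr_eq_mul (f := fun i => (hM.eigenvalues i)⁻¹)
    (fun i => ?_) (inv_nonneg.2 ha.le) fun i => ?_
  · simpa [eq_inv_mul_iff_mul_eq₀ (hpos i).ne'] using (hM.repr_mv_aeval X x i).symm
  · rw [abs_of_pos (inv_pos.2 (hpos i))]
    exact inv_anti₀ ha (h _ (hM.eigenvalues_mem_spectrum_real i))

theorem norm_mv_residual_le (hM : M.IsHermitian) [Invertible M] {p : ℝ[X]} {r : ℝ} (hr : 0 ≤ r)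
    (hp : ∀ μ ∈ spectrum ℝ M, |p.eval μ| ≤ r) (c : EuclideanSpace ℝ (Fin n)) :
    ‖mv M (mv ((1 - aeval M p) * M⁻¹) c - mv M⁻¹ c)‖ ≤ r * ‖c‖ := by
  rw [mv_residual_eq_neg_mv_aeval, norm_neg]
  exact hM.norm_mv_aeval_le hr hp c

end Matrix.IsHermitian

/-- Exact-arithmetic Krylov (Lanczos) solve guarantee for an spd matrix with spectrum in [a,b]. -/
theorem stmt13 {n : ℕ} (M : Matrix (Fin n) (Fin n) ℝ) (c : EuclideanSpace ℝ (Fin n))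
    (a b : ℝ) (k : ℕ) (ha : 0 < a) (hab : a ≤ b)
    (hsymm : M.IsHermitian) (hspec : ∀ μ ∈ spectrum ℝ M, μ ∈ Set.Icc a b)
    (hinv : Invertible M) :
    (∀ p : Polynomial ℝ, p.eval 0 = 1 → p.natDegree ≤ k →
      mv ((1 - Polynomial.aeval M p) * M⁻¹) c ∈
          Submodule.span ℝ (Set.range fun j : Fin k => mv (M ^ (j : ℕ)) c) ∧
        ∀ bd : ℝ, (∀ x ∈ Set.Icc a b, |p.eval x| ≤ bd) →
          ‖mv M (mv ((1 - Polynomial.aeval M p) * M⁻¹) c - mv M⁻¹ c)‖ ≤ bd * ‖c‖) ∧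
    ∃ y ∈ Submodule.span ℝ (Set.range fun j : Fin k => mv (M ^ (j : ℕ)) c),
      sn M * ‖y - mv M⁻¹ c‖ ≤
        (b / a) * 2 * ((Real.sqrt (b / a) - 1) / (Real.sqrt (b / a) + 1)) ^ k * ‖c‖ := by
  have hb : 0 ≤ b := ha.le.trans hab
  have residual_le (p : ℝ[X]) (bd : ℝ) (hbd : ∀ x ∈ Set.Icc a b, |p.eval x| ≤ bd) :=
    hsymm.norm_mv_residual_le ((abs_nonneg _).trans (hbd a ⟨le_rfl, hab⟩))
      (fun μ hμ => hbd μ (hspec μ hμ)) c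
  refine ⟨fun p hp0 hpk => ⟨mv_one_sub_aeval_mul_inv_mem_krylovSubspace M c hp0 hpk,
    residual_le p⟩, ?_⟩
  obtain ⟨p, hp0, hpk, hpbd⟩ := exists_eval_zero_eq_one_abs_eval_le ha hab k
  refine ⟨_, mv_one_sub_aeval_mul_inv_mem_krylovSubspace M c hp0 hpk, ?_⟩
  calc sn M * ‖mv ((1 - aeval M p) * M⁻¹) c - mv M⁻¹ c‖
      ≤ b * (a⁻¹ * ‖mv M (mv ((1 - aeval M p) * M⁻¹) c - mv M⁻¹ c)‖) :=
        mul_le_mul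
          (hsymm.sn_le hb fun μ hμ => abs_le.2 ⟨by linarith [(hspec μ hμ).1], (hspec μ hμ).2⟩)
          (hsymm.norm_le_inv_mul_norm_mv ha (fun μ hμ => (hspec μ hμ).1) _) (norm_nonneg _) hb
    _ ≤ b * (a⁻¹ * (2 * ((Real.sqrt (b / a) - 1) / (Real.sqrt (b / a) + 1)) ^ k * ‖c‖)) := by
        gcongr
        exact residual_le p _ hpbd
    _ = _ := by ring
end
end
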